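/- Consider a finite-horizon linear MDP as in the context. Fix a stage h ∈ {1,…,H}, a real λ > 0, an integer m ≥ 0, triples (s_i, a_i, s'_i) ∈ S × A × S for i = 1,…,m, and a function V' : S → ℝ with 0 ≤ V'(s) ≤ H for all s. Define Σ = λ·I_d + Σ_{i=1}^{m} φ(s_i,a_i) φ(s_i,a_i)ᵀ, b = Σ_{i=1}^{m} φ(s_i,a_i)·(r_h(s_i,a_i) + V'(s'_i)), w = Σ^{−1} b, and E = ‖Σ_{i=1}^{m} φ(s_i,a_i)·(V'(s'_i) − [P_h V'](s_i,a_i))‖_{Σ^{−1}}. Then for every policy π : S × {1,…,H} → A and every (s,a) ∈ S × A: |⟨w, φ(s,a)⟩ − Q^π_h(s,a) − [P_h (V' − V^π_{h+1})](s,a)| ≤ (E + 4H·√(dλ)) · √(φ(s,a)ᵀ Σ^{−1} φ(s,a)). -/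

import Mathlib

/-!
Put `w̄ = μ_h + ∑ₜ V'(t) θ_h(t)`. Linearity of the MDP gives
`⟨φ(s,a), w̄⟩ = r_h(s,a) + [P_h V'](s,a)`, so the quantity to bound is `⟨w - w̄, φ(s,a)⟩`,
and the normal equations give `w - w̄ = Σ⁻¹ (ξ - λ w̄)`, where `ξ` is the noise vector whose
`Σ⁻¹`-norm is `E`. Cauchy–Schwarz for the inner product `Σ⁻¹` bounds the two terms by
`E ‖φ‖_{Σ⁻¹}` and `λ ‖w̄‖_{Σ⁻¹} ‖φ‖_{Σ⁻¹}`, and `Σ ⪰ λ I` gives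
`λ ‖w̄‖_{Σ⁻¹} ≤ √λ ‖w̄‖₂ ≤ √λ (1 + H) √d`.
-/

open Matrix Finset

namespace Matrix

variable {n : Type*} [Fintype n]

lemma sqrt_dotProduct_self_eq_norm (v : n → ℝ) : √(v ⬝ᵥ v) = ‖WithLp.toLp 2 v‖ := by
  rw [norm_eq_sqrt_real_inner, EuclideanSpace.inner_toLp_toLp, star_trivial]

lemma sqrt_dotProduct_self_add_le (u v : n → ℝ) :
    √((u + v) ⬝ᵥ (u + v)) ≤ √(u ⬝ᵥ u) + √(v ⬝ᵥ v) := by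
  simpa only [sqrt_dotProduct_self_eq_norm, WithLp.toLp_add] using
    norm_add_le (WithLp.toLp 2 u) (WithLp.toLp 2 v)

lemma PosSemidef.dotProduct_mulVec_sq_le {M : Matrix n n ℝ} (hM : M.PosSemidef) (x y : n → ℝ) :
    (x ⬝ᵥ M *ᵥ y) ^ 2 ≤ (x ⬝ᵥ M *ᵥ x) * (y ⬝ᵥ M *ᵥ y) := by
  classical
  have hsymm : LinearMap.IsSymm M.toBilin' :=
    LinearMap.BilinForm.isSymm_iff.mp (isSymm_toBilin'_iff_isSymm.mpr hM.isHermitian)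
  have hnonneg (z : n → ℝ) : 0 ≤ M.toBilin' z z := by
    simpa only [toBilin'_apply', star_trivial] using hM.dotProduct_mulVec_nonneg z
  simpa only [toBilin'_apply'] using M.toBilin'.apply_sq_le_of_symm hnonneg hsymm x y

lemma PosSemidef.abs_dotProduct_mulVec_le {M : Matrix n n ℝ} (hM : M.PosSemidef) (x y : n → ℝ) :
    |x ⬝ᵥ M *ᵥ y| ≤ √(x ⬝ᵥ M *ᵥ x) * √(y ⬝ᵥ M *ᵥ y) := by
  have hx : 0 ≤ x ⬝ᵥ M *ᵥ x := by simpa only [star_trivial] using hM.dotProduct_mulVec_nonneg x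
  rw [← Real.sqrt_mul hx]
  exact Real.abs_le_sqrt (hM.dotProduct_mulVec_sq_le x y)

lemma IsSymm.mulVec_dotProduct {M : Matrix n n ℝ} (hM : M.IsSymm) (v x : n → ℝ) :
    M *ᵥ v ⬝ᵥ x = v ⬝ᵥ M *ᵥ x := by
  rw [dotProduct_comm, dotProduct_mulVec, ← mulVec_transpose, hM.eq, dotProduct_comm]

lemma PosDef.dotProduct_inv_mulVec_le [DecidableEq n] {M : Matrix n n ℝ} (hM : M.PosDef)
    {lam : ℝ} (hlam : 0 < lam) (hlow : ∀ x, lam * (x ⬝ᵥ x) ≤ x ⬝ᵥ M *ᵥ x) (y : n → ℝ) :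
    y ⬝ᵥ M⁻¹ *ᵥ y ≤ (y ⬝ᵥ y) / lam := by
  set z := M⁻¹ *ᵥ y
  have hMz : M *ᵥ z = y := by
    rw [mulVec_mulVec, mul_nonsing_inv _ hM.det_pos.ne'.isUnit, one_mulVec]
  have hq : y ⬝ᵥ z = z ⬝ᵥ M *ᵥ z := by rw [hMz, dotProduct_comm]
  have hcs : (y ⬝ᵥ z) ^ 2 ≤ (y ⬝ᵥ y) * (z ⬝ᵥ z) := by
    simpa only [one_mulVec] using PosSemidef.one.dotProduct_mulVec_sq_le y z
  have hlow_z : lam * (z ⬝ᵥ z) ≤ y ⬝ᵥ z := hq ▸ hlow z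
  rw [le_div_iff₀ hlam]
  have hyy : 0 ≤ y ⬝ᵥ y := by simpa only [star_trivial] using dotProduct_self_star_nonneg y
  have hzz : 0 ≤ z ⬝ᵥ z := by simpa only [star_trivial] using dotProduct_self_star_nonneg z
  rcases (le_trans (mul_nonneg hlam.le hzz) hlow_z).eq_or_lt with hq0 | hqpos
  · rw [← hq0, zero_mul]
    exact hyy
  · refine le_of_mul_le_mul_left ?_ hqpos
    nlinarith [mul_le_mul_of_nonneg_left hlow_z hyy]

end Matrix

section RidgeRegression

variable {ι n : Type*} [Fintype ι] [Fintype n] [DecidableEq n] (lam : ℝ) (ψ : ι → n → ℝ)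

def ridgeGram : Matrix n n ℝ := lam • 1 + ∑ i, vecMulVec (ψ i) (ψ i)

lemma ridgeGram_mulVec (x : n → ℝ) :
    ridgeGram lam ψ *ᵥ x = lam • x + ∑ i, (ψ i ⬝ᵥ x) • ψ i := by
  ext j
  simp [ridgeGram, add_mulVec, smul_mulVec, Matrix.sum_mulVec, vecMulVec_mulVec]

lemma dotProduct_ridgeGram_mulVec (x : n → ℝ) :
    x ⬝ᵥ ridgeGram lam ψ *ᵥ x = lam * (x ⬝ᵥ x) + ∑ i, (ψ i ⬝ᵥ x) ^ 2 := by
  simp only [ridgeGram_mulVec, dotProduct_add, dotProduct_smul, dotProduct_sum, smul_eq_mul,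
    dotProduct_comm x (ψ _), sq]

variable {lam}

lemma posDef_ridgeGram (hlam : 0 < lam) : (ridgeGram lam ψ).PosDef :=
  (PosDef.one.smul hlam).add_posSemidef
    (posSemidef_sum _ fun i _ => by simpa using posSemidef_vecMulVec_self_star (ψ i))

lemma ridgeGram_inv_mulVec_sub (hlam : 0 < lam) (y : ι → ℝ) (wbar : n → ℝ) :
    (ridgeGram lam ψ)⁻¹ *ᵥ (∑ i, y i • ψ i) - wbar =
      (ridgeGram lam ψ)⁻¹ *ᵥ (∑ i, (y i - ψ i ⬝ᵥ wbar) • ψ i - lam • wbar) := by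
  have hunit := (posDef_ridgeGram ψ hlam).det_pos.ne'.isUnit
  have hresidual : ∑ i, (y i - ψ i ⬝ᵥ wbar) • ψ i - lam • wbar =
      ∑ i, y i • ψ i - ridgeGram lam ψ *ᵥ wbar := by
    simp only [ridgeGram_mulVec, sub_smul, Finset.sum_sub_distrib]
    abel
  rw [hresidual, mulVec_sub, mulVec_mulVec, nonsing_inv_mul _ hunit, one_mulVec]

lemma le_dotProduct_ridgeGram_mulVec (x : n → ℝ) :
    lam * (x ⬝ᵥ x) ≤ x ⬝ᵥ ridgeGram lam ψ *ᵥ x := by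
  rw [dotProduct_ridgeGram_mulVec]
  exact le_add_of_nonneg_right (Finset.sum_nonneg fun i _ => sq_nonneg (ψ i ⬝ᵥ x))

lemma mul_sqrt_dotProduct_ridgeGram_inv_mulVec_le (hlam : 0 < lam) (v : n → ℝ) :
    lam * √(v ⬝ᵥ (ridgeGram lam ψ)⁻¹ *ᵥ v) ≤ √lam * √(v ⬝ᵥ v) := by
  have hquad := (posDef_ridgeGram ψ hlam).dotProduct_inv_mulVec_le hlam
    (le_dotProduct_ridgeGram_mulVec ψ) v
  rw [le_div_iff₀ hlam] at hquad
  calc lam * √(v ⬝ᵥ (ridgeGram lam ψ)⁻¹ *ᵥ v)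
      = √lam * √(lam * (v ⬝ᵥ (ridgeGram lam ψ)⁻¹ *ᵥ v)) := by
        rw [Real.sqrt_mul hlam.le, ← mul_assoc, Real.mul_self_sqrt hlam.le]
    _ ≤ √lam * √(v ⬝ᵥ v) := by gcongr; linarith

theorem abs_ridge_sub_dotProduct_le (hlam : 0 < lam) (y : ι → ℝ) (wbar x : n → ℝ) :
    |((ridgeGram lam ψ)⁻¹ *ᵥ (∑ i, y i • ψ i) - wbar) ⬝ᵥ x| ≤
      (√((∑ i, (y i - ψ i ⬝ᵥ wbar) • ψ i) ⬝ᵥ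
          (ridgeGram lam ψ)⁻¹ *ᵥ (∑ i, (y i - ψ i ⬝ᵥ wbar) • ψ i))
        + √lam * √(wbar ⬝ᵥ wbar)) * √(x ⬝ᵥ (ridgeGram lam ψ)⁻¹ *ᵥ x) := by
  set G := ridgeGram lam ψ
  set ξ := ∑ i, (y i - ψ i ⬝ᵥ wbar) • ψ i
  have hinv : G⁻¹.PosSemidef := (posDef_ridgeGram ψ hlam).inv.posSemidef
  have hsymm : G⁻¹.IsSymm := isHermitian_iff_isSymm.mp hinv.isHermitian
  rw [ridgeGram_inv_mulVec_sub ψ hlam, mulVec_sub, mulVec_smul, sub_dotProduct, smul_dotProduct,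
    smul_eq_mul, hsymm.mulVec_dotProduct, hsymm.mulVec_dotProduct]
  calc |ξ ⬝ᵥ G⁻¹ *ᵥ x - lam * (wbar ⬝ᵥ G⁻¹ *ᵥ x)|
      ≤ |ξ ⬝ᵥ G⁻¹ *ᵥ x| + lam * |wbar ⬝ᵥ G⁻¹ *ᵥ x| := by
        refine (abs_sub _ _).trans_eq ?_
        rw [abs_mul, abs_of_pos hlam]
    _ ≤ √(ξ ⬝ᵥ G⁻¹ *ᵥ ξ) * √(x ⬝ᵥ G⁻¹ *ᵥ x)
          + lam * (√(wbar ⬝ᵥ G⁻¹ *ᵥ wbar) * √(x ⬝ᵥ G⁻¹ *ᵥ x)) := by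
        gcongr <;> exact hinv.abs_dotProduct_mulVec_le _ _
    _ ≤ √(ξ ⬝ᵥ G⁻¹ *ᵥ ξ) * √(x ⬝ᵥ G⁻¹ *ᵥ x)
          + √lam * √(wbar ⬝ᵥ wbar) * √(x ⬝ᵥ G⁻¹ *ᵥ x) := by
        rw [← mul_assoc]
        gcongr _ + ?_ * _
        exact mul_sqrt_dotProduct_ridgeGram_inv_mulVec_le ψ hlam wbar
    _ = _ := by ring

end RidgeRegression

section LinearMDP

variable {S A n : Type*} [Fintype S] [Fintype n]

lemma dotProduct_add_sum_smul_eq_bellman {φ : S → A → n → ℝ} {μ : n → ℝ} {θ : S → n → ℝ}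
    {r : S → A → ℝ} {P : S → A → S → ℝ} (hr : ∀ s a, r s a = φ s a ⬝ᵥ μ)
    (hP : ∀ s a t, P s a t = φ s a ⬝ᵥ θ t) (V : S → ℝ) (s : S) (a : A) :
    φ s a ⬝ᵥ (μ + ∑ t, V t • θ t) = r s a + ∑ t, P s a t * V t := by
  simp only [dotProduct_add, dotProduct_sum, dotProduct_smul, smul_eq_mul, hr, hP, mul_comm]

lemma sqrt_dotProduct_add_sum_smul_le {μ : n → ℝ} {θ : S → n → ℝ} {C K : ℝ} (hC : 0 ≤ C)
    (hμ : √(μ ⬝ᵥ μ) ≤ C)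
    (hθ : ∀ c : S → ℝ, √((∑ t, c t • θ t) ⬝ᵥ (∑ t, c t • θ t)) ≤ C * ⨆ t, |c t|)
    {V : S → ℝ} (hV : ∀ t, |V t| ≤ K) (hK : 0 ≤ K) :
    √((μ + ∑ t, V t • θ t) ⬝ᵥ (μ + ∑ t, V t • θ t)) ≤ C + C * K :=
  (sqrt_dotProduct_self_add_le _ _).trans <|
    add_le_add hμ <| (hθ V).trans <| mul_le_mul_of_nonneg_left (Real.iSup_le hV hK) hC

end LinearMDP

theorem linear_mdp_regression_error_general
    {S A : Type*} [Fintype S]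
    (d H : ℕ)
    (φ : S → A → Fin d → ℝ)
    (μv : ℕ → Fin d → ℝ)
    (hμ : ∀ h ∈ Finset.Icc 1 H, Real.sqrt (μv h ⬝ᵥ μv h) ≤ Real.sqrt d)
    (θ : ℕ → S → Fin d → ℝ)
    (r : ℕ → S → A → ℝ) (hr : ∀ h s a, r h s a = φ s a ⬝ᵥ μv h)
    (P : ℕ → S → A → S → ℝ) (hP : ∀ h s a s', P h s a s' = φ s a ⬝ᵥ θ h s')
    (hθ : ∀ h ∈ Finset.Icc 1 H, ∀ c : S → ℝ,
      Real.sqrt ((∑ s' : S, c s' • θ h s') ⬝ᵥ (∑ s' : S, c s' • θ h s'))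
        ≤ Real.sqrt d * ⨆ s' : S, |c s'|)
    -- policy value functions, for every policy π
    (Q : (S → ℕ → A) → ℕ → S → A → ℝ) (V : (S → ℕ → A) → ℕ → S → ℝ)
    (hQ : ∀ π, ∀ h ∈ Finset.Icc 1 H, ∀ s a,
      Q π h s a = r h s a + ∑ s' : S, P h s a s' * V π (h + 1) s')
    -- the fixed data
    (h : ℕ) (hh : h ∈ Finset.Icc 1 H)
    (lam : ℝ) (hlam : 0 < lam)
    (m : ℕ)
    (ss : Fin m → S) (aa : Fin m → A) (ss' : Fin m → S)
    (V' : S → ℝ) (hV' : ∀ s, V' s ∈ Set.Icc (0 : ℝ) (H : ℝ))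
    (Sig : Matrix (Fin d) (Fin d) ℝ)
    (hSig : Sig = lam • (1 : Matrix (Fin d) (Fin d) ℝ)
        + ∑ i : Fin m, Matrix.vecMulVec (φ (ss i) (aa i)) (φ (ss i) (aa i)))
    (b : Fin d → ℝ)
    (hb : b = ∑ i : Fin m, (r h (ss i) (aa i) + V' (ss' i)) • φ (ss i) (aa i))
    (w : Fin d → ℝ) (hw : w = (Sig⁻¹).mulVec b)
    (E : ℝ)
    (hE : E = Real.sqrt
      ((∑ i : Fin m, (V' (ss' i) - ∑ t : S, P h (ss i) (aa i) t * V' t)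
          • φ (ss i) (aa i)) ⬝ᵥ
        (Sig⁻¹).mulVec
          (∑ i : Fin m, (V' (ss' i) - ∑ t : S, P h (ss i) (aa i) t * V' t)
            • φ (ss i) (aa i)))) :
    ∀ π : S → ℕ → A, ∀ s a,
      |w ⬝ᵥ φ s a - Q π h s a
          - ∑ s' : S, P h s a s' * (V' s' - V π (h + 1) s')|
        ≤ (E + 4 * H * Real.sqrt (d * lam))
            * Real.sqrt (φ s a ⬝ᵥ (Sig⁻¹).mulVec (φ s a)) := by
  intro π s a
  set ψ : Fin m → Fin d → ℝ := fun i => φ (ss i) (aa i)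
  set wbar := μv h + ∑ t, V' t • θ h t
  have hG : Sig = ridgeGram lam ψ := hSig
  have hbellman := dotProduct_add_sum_smul_eq_bellman (hr h) (hP h) V'
  have hH : (1 : ℝ) ≤ H := by
    exact_mod_cast (Finset.mem_Icc.mp hh).1.trans (Finset.mem_Icc.mp hh).2
  have hwbar : √(wbar ⬝ᵥ wbar) ≤ √d + √d * H :=
    sqrt_dotProduct_add_sum_smul_le (Real.sqrt_nonneg _) (hμ h hh) (hθ h hh)
      (fun t => (abs_of_nonneg (hV' t).1).trans_le (hV' t).2) (by positivity)
  have hresidual : ∀ i, r h (ss i) (aa i) + V' (ss' i) - ψ i ⬝ᵥ wbar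
      = V' (ss' i) - ∑ t, P h (ss i) (aa i) t * V' t := fun i => by
    rw [hbellman]
    ring
  have herror : w ⬝ᵥ φ s a - Q π h s a - ∑ s', P h s a s' * (V' s' - V π (h + 1) s')
      = (w - wbar) ⬝ᵥ φ s a := by
    rw [sub_dotProduct, dotProduct_comm wbar, hbellman, hQ π h hh]
    simp only [mul_sub, Finset.sum_sub_distrib]
    ring
  subst hG hw hb hE
  rw [herror]
  refine (abs_ridge_sub_dotProduct_le ψ hlam _ wbar (φ s a)).trans ?_
  simp only [hresidual]
  gcongr (_ + ?_) * _
  calc √lam * √(wbar ⬝ᵥ wbar) ≤ √lam * (√d + √d * H) := by gcongr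
    _ ≤ 4 * H * (√d * √lam) := by
      nlinarith [mul_nonneg (Real.sqrt_nonneg (d : ℝ)) (Real.sqrt_nonneg lam)]
    _ = 4 * H * √(d * lam) := by rw [Real.sqrt_mul (Nat.cast_nonneg d)]

/-- Ridge regression error decomposition in a linear MDP: for any policy `π` and
any `(s,a)`, the linear estimate `⟨w, φ(s,a)⟩` deviates from
`Q^π_h(s,a) + [P_h(V' - V^π_{h+1})](s,a)` by at most
`(E + 4H√(dλ)) √(φ(s,a)ᵀ Σ⁻¹ φ(s,a))`. -/
theorem linear_mdp_regression_error
    {S A : Type*} [Fintype S] [Nonempty S] [Fintype A] [Nonempty A]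
    (d H : ℕ) (hd : 0 < d) (hH : 0 < H)
    (φ : S → A → Fin d → ℝ) (hφ : ∀ s a, Real.sqrt (φ s a ⬝ᵥ φ s a) ≤ 1)
    (μv : ℕ → Fin d → ℝ)
    (hμ : ∀ h ∈ Finset.Icc 1 H, Real.sqrt (μv h ⬝ᵥ μv h) ≤ Real.sqrt d)
    (θ : ℕ → S → Fin d → ℝ)
    (r : ℕ → S → A → ℝ) (hr : ∀ h s a, r h s a = φ s a ⬝ᵥ μv h)
    (hr01 : ∀ h ∈ Finset.Icc 1 H, ∀ s a, r h s a ∈ Set.Icc (0 : ℝ) 1)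
    (P : ℕ → S → A → S → ℝ) (hP : ∀ h s a s', P h s a s' = φ s a ⬝ᵥ θ h s')
    (hPnn : ∀ h ∈ Finset.Icc 1 H, ∀ s a s', 0 ≤ P h s a s')
    (hPsum : ∀ h ∈ Finset.Icc 1 H, ∀ s a, ∑ s' : S, P h s a s' = 1)
    (hθ : ∀ h ∈ Finset.Icc 1 H, ∀ c : S → ℝ,
      Real.sqrt ((∑ s' : S, c s' • θ h s') ⬝ᵥ (∑ s' : S, c s' • θ h s'))
        ≤ Real.sqrt d * ⨆ s' : S, |c s'|)
    -- policy value functions, for every policy π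
    (Q : (S → ℕ → A) → ℕ → S → A → ℝ) (V : (S → ℕ → A) → ℕ → S → ℝ)
    (hVend : ∀ π s, V π (H + 1) s = 0)
    (hQ : ∀ π, ∀ h ∈ Finset.Icc 1 H, ∀ s a,
      Q π h s a = r h s a + ∑ s' : S, P h s a s' * V π (h + 1) s')
    (hV : ∀ π, ∀ h ∈ Finset.Icc 1 H, ∀ s, V π h s = Q π h s (π s h))
    -- the fixed data
    (h : ℕ) (hh : h ∈ Finset.Icc 1 H)
    (lam : ℝ) (hlam : 0 < lam)
    (m : ℕ)
    (ss : Fin m → S) (aa : Fin m → A) (ss' : Fin m → S)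
    (V' : S → ℝ) (hV' : ∀ s, V' s ∈ Set.Icc (0 : ℝ) (H : ℝ))
    (Sig : Matrix (Fin d) (Fin d) ℝ)
    (hSig : Sig = lam • (1 : Matrix (Fin d) (Fin d) ℝ)
        + ∑ i : Fin m, Matrix.vecMulVec (φ (ss i) (aa i)) (φ (ss i) (aa i)))
    (b : Fin d → ℝ)
    (hb : b = ∑ i : Fin m, (r h (ss i) (aa i) + V' (ss' i)) • φ (ss i) (aa i))
    (w : Fin d → ℝ) (hw : w = (Sig⁻¹).mulVec b)
    (E : ℝ)
    (hE : E = Real.sqrt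
      ((∑ i : Fin m, (V' (ss' i) - ∑ t : S, P h (ss i) (aa i) t * V' t)
          • φ (ss i) (aa i)) ⬝ᵥ
        (Sig⁻¹).mulVec
          (∑ i : Fin m, (V' (ss' i) - ∑ t : S, P h (ss i) (aa i) t * V' t)
            • φ (ss i) (aa i)))) :
    ∀ π : S → ℕ → A, ∀ s a,
      |w ⬝ᵥ φ s a - Q π h s a
          - ∑ s' : S, P h s a s' * (V' s' - V π (h + 1) s')|
        ≤ (E + 4 * H * Real.sqrt (d * lam))
            * Real.sqrt (φ s a ⬝ᵥ (Sig⁻¹).mulVec (φ s a)) :=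
  linear_mdp_regression_error_general d H φ μv hμ θ r hr P hP hθ Q V hQ h hh lam hlam m ss aa ss' V'
    hV' Sig hSig b hb w hw E hE
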